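/- Let g be the flat light-cone metric on ℝ⁴ with components g_{uv} = g_{vu} = 1, g_{xx} = g_{yy} = 1 and all others zero, and let K be the tensor field with K_{uu} = 1 and all other components zero. Let b ∈ (0,1) and M ∈ ℝ, and set c = (b/(1−b))M². Then: (i) the vector field Υ_D with components Υ_D^v = M²u + 2v, Υ_D^x = x, Υ_D^y = y, Υ_D^u = 0 satisfies (L_{Υ_D}(g − cK))_{μν} = 2·(g_{μν} + M²K_{μν}) everywhere (i.e. the disformal condition with Ω = 1); and (ii) the vector field Υ_K with components Υ_K^u = u², Υ_K^v = (1/2)(((1+b)/(1−b))M²u² − x² − y²), Υ_K^x = ux, Υ_K^y = uy satisfies (L_{Υ_K}(g − cK))_{μν} = 2u·(g_{μν} + M²K_{μν}) everywhere (i.e. with Ω(u,v,x,y) = u). -/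

import Mathlib

/-- Partial derivative of a scalar function on ℝ^N in the i-th coordinate direction. -/
noncomputable def pd {N : ℕ} (f : (Fin N → ℝ) → ℝ) (i : Fin N) (x : Fin N → ℝ) : ℝ :=
  fderiv ℝ f x (Pi.single i 1)

/-- Lie derivative of a covariant 2-tensor field `T` along the vector field `V`. -/
noncomputable def lieD {N : ℕ} (V : (Fin N → ℝ) → Fin N → ℝ)
    (T : (Fin N → ℝ) → Fin N → Fin N → ℝ) (x : Fin N → ℝ) (μ ν : Fin N) : ℝ :=
  ∑ σ, (V x σ * pd (fun y => T y μ ν) σ x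
    + T x σ ν * pd (fun y => V y σ) μ x
    + T x μ σ * pd (fun y => V y σ) ν x)

/-- Flat light-cone metric on ℝ⁴ (coordinates (u,v,x,y) = indices (0,1,2,3)):
g_{uv} = g_{vu} = 1, g_{xx} = g_{yy} = 1, all other components zero. -/
noncomputable def lcMetric (x : Fin 4 → ℝ) (μ ν : Fin 4) : ℝ :=
  if (μ = 0 ∧ ν = 1) ∨ (μ = 1 ∧ ν = 0) then 1
  else if (μ = 2 ∧ ν = 2) ∨ (μ = 3 ∧ ν = 3) then 1
  else 0

/-- The tensor K with K_{uu} = 1 and all other components zero. -/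
noncomputable def ppK (x : Fin 4 → ℝ) (μ ν : Fin 4) : ℝ :=
  if μ = 0 ∧ ν = 0 then 1 else 0


/-!
Both `g` and `K` have constant components, so the Lie derivative of `g - c K` along `Υ` is
`Jᵀ (g - c K) + (g - c K) J`, with `J` the Jacobian matrix of `Υ`. The fields `Υ_D` and `Υ_K` are
polynomial, their Jacobians are explicit, and both identities become entrywise computations with
4 × 4 matrices.
-/

section PartialDerivative

variable {N : ℕ} {f g : (Fin N → ℝ) → ℝ} {i : Fin N} {x : Fin N → ℝ}

lemma pd_const (a : ℝ) (i : Fin N) (x : Fin N → ℝ) : pd (fun _ => a) i x = 0 := by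
  simp [pd]

lemma pd_coord (j i : Fin N) (x : Fin N → ℝ) :
    pd (fun y => y j) i x = if j = i then 1 else 0 := by
  simp [pd, fderiv_apply, Pi.single_apply]

lemma pd_add (hf : DifferentiableAt ℝ f x) (hg : DifferentiableAt ℝ g x) :
    pd (fun y => f y + g y) i x = pd f i x + pd g i x := by
  simp [pd, fderiv_fun_add hf hg]

lemma pd_sub (hf : DifferentiableAt ℝ f x) (hg : DifferentiableAt ℝ g x) :
    pd (fun y => f y - g y) i x = pd f i x - pd g i x := by
  simp [pd, fderiv_fun_sub hf hg]

lemma pd_mul (hf : DifferentiableAt ℝ f x) (hg : DifferentiableAt ℝ g x) :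
    pd (fun y => f y * g y) i x = pd f i x * g x + f x * pd g i x := by
  simp only [pd, fderiv_fun_mul hf hg, add_apply, smul_apply, smul_eq_mul]
  ring

lemma pd_pow (n : ℕ) (hf : DifferentiableAt ℝ f x) :
    pd (fun y => f y ^ n) i x = n * f x ^ (n - 1) * pd f i x := by
  simp [pd, fderiv_fun_pow n hf, mul_assoc]

end PartialDerivative

open Matrix

noncomputable def jacobian {N : ℕ} (V : (Fin N → ℝ) → Fin N → ℝ) (x : Fin N → ℝ) :
    Matrix (Fin N) (Fin N) ℝ :=
  of fun σ μ => pd (fun y => V y σ) μ x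

lemma lieD_apply_of_forall_eq {N : ℕ} {V : (Fin N → ℝ) → Fin N → ℝ}
    {T : (Fin N → ℝ) → Fin N → Fin N → ℝ} {x : Fin N → ℝ} (hT : ∀ y, T y = T x) (μ ν : Fin N) :
    lieD V T x μ ν = ((jacobian V x)ᵀ * of (T x) + of (T x) * jacobian V x) μ ν := by
  simp [lieD, hT, pd_const, jacobian, mul_apply, Finset.sum_add_distrib, mul_comm]

noncomputable def upsilonD (M : ℝ) (x : Fin 4 → ℝ) (μ : Fin 4) : ℝ :=
  if μ = 0 then 0
  else if μ = 1 then M ^ 2 * x 0 + 2 * x 1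
  else x μ

noncomputable def upsilonK (b M : ℝ) (x : Fin 4 → ℝ) (μ : Fin 4) : ℝ :=
  if μ = 0 then (x 0) ^ 2
  else if μ = 1 then (1 / 2) * (((1 + b) / (1 - b)) * M ^ 2 * (x 0) ^ 2
    - (x 2) ^ 2 - (x 3) ^ 2)
  else x 0 * x μ

lemma jacobian_upsilonD (M : ℝ) (x : Fin 4 → ℝ) :
    jacobian (upsilonD M) x = !![0, 0, 0, 0; M ^ 2, 2, 0, 0; 0, 0, 1, 0; 0, 0, 0, 1] := by
  ext σ μ
  fin_cases σ <;> fin_cases μ <;>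
    simp (disch := fun_prop) [jacobian, upsilonD, pd_add, pd_mul, pd_coord, pd_const]

lemma jacobian_upsilonK (b M : ℝ) (x : Fin 4 → ℝ) :
    jacobian (upsilonK b M) x =
      !![2 * x 0, 0, 0, 0;
         (1 + b) / (1 - b) * M ^ 2 * x 0, 0, -x 2, -x 3;
         x 2, 0, x 0, 0;
         x 3, 0, 0, x 0] := by
  ext σ μ
  fin_cases σ <;> fin_cases μ <;>
    simp (disch := fun_prop) [jacobian, upsilonK, pd_sub, pd_mul, pd_pow, pd_coord, pd_const] <;>
    ring

lemma lieD_upsilonD (M c : ℝ) (x : Fin 4 → ℝ) (μ ν : Fin 4) :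
    lieD (upsilonD M) (fun y μ' ν' => lcMetric y μ' ν' - c * ppK y μ' ν') x μ ν
      = 2 * (lcMetric x μ ν + M ^ 2 * ppK x μ ν) := by
  rw [lieD_apply_of_forall_eq (fun _ => rfl), jacobian_upsilonD]
  fin_cases μ <;> fin_cases ν <;> simp [mul_apply, Fin.sum_univ_four, lcMetric, ppK] <;> ring

lemma lieD_upsilonK {b : ℝ} (hb : b ≠ 1) (M : ℝ) (x : Fin 4 → ℝ) (μ ν : Fin 4) :
    lieD (upsilonK b M)
        (fun y μ' ν' => lcMetric y μ' ν' - b / (1 - b) * M ^ 2 * ppK y μ' ν') x μ ν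
      = 2 * x 0 * (lcMetric x μ ν + M ^ 2 * ppK x μ ν) := by
  rw [lieD_apply_of_forall_eq (fun _ => rfl), jacobian_upsilonK]
  have hb' : 1 - b ≠ 0 := sub_ne_zero.mpr hb.symm
  -- the uu-component is where c enters: (1 + b) / (1 - b) - 2 * b / (1 - b) = 1
  fin_cases μ <;> fin_cases ν <;> simp [mul_apply, Fin.sum_univ_four, lcMetric, ppK] <;>
    field_simp <;> ring

theorem stmt17_general (b M : ℝ) (hb1 : b < 1)
    (c : ℝ) (hc : c = (b / (1 - b)) * M ^ 2)
    (ΥD ΥK : (Fin 4 → ℝ) → Fin 4 → ℝ)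
    (hΥD : ΥD = fun x μ =>
      if μ = 0 then 0
      else if μ = 1 then M ^ 2 * x 0 + 2 * x 1
      else x μ)
    (hΥK : ΥK = fun x μ =>
      if μ = 0 then (x 0) ^ 2
      else if μ = 1 then (1 / 2) * (((1 + b) / (1 - b)) * M ^ 2 * (x 0) ^ 2
        - (x 2) ^ 2 - (x 3) ^ 2)
      else x 0 * x μ) :
    (∀ x : Fin 4 → ℝ, ∀ μ ν : Fin 4,
      lieD ΥD (fun y μ' ν' => lcMetric y μ' ν' - c * ppK y μ' ν') x μ ν
        = 2 * (lcMetric x μ ν + M ^ 2 * ppK x μ ν))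
    ∧ (∀ x : Fin 4 → ℝ, ∀ μ ν : Fin 4,
      lieD ΥK (fun y μ' ν' => lcMetric y μ' ν' - c * ppK y μ' ν') x μ ν
        = 2 * x 0 * (lcMetric x μ ν + M ^ 2 * ppK x μ ν)) := by
  subst hc hΥD hΥK
  exact ⟨lieD_upsilonD M _, lieD_upsilonK hb1.ne M⟩

theorem stmt17 (b M : ℝ) (hb0 : 0 < b) (hb1 : b < 1)
    (c : ℝ) (hc : c = (b / (1 - b)) * M ^ 2)
    (ΥD ΥK : (Fin 4 → ℝ) → Fin 4 → ℝ)
    (hΥD : ΥD = fun x μ =>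
      if μ = 0 then 0
      else if μ = 1 then M ^ 2 * x 0 + 2 * x 1
      else x μ)
    (hΥK : ΥK = fun x μ =>
      if μ = 0 then (x 0) ^ 2
      else if μ = 1 then (1 / 2) * (((1 + b) / (1 - b)) * M ^ 2 * (x 0) ^ 2
        - (x 2) ^ 2 - (x 3) ^ 2)
      else x 0 * x μ) :
    (∀ x : Fin 4 → ℝ, ∀ μ ν : Fin 4,
      lieD ΥD (fun y μ' ν' => lcMetric y μ' ν' - c * ppK y μ' ν') x μ ν
        = 2 * (lcMetric x μ ν + M ^ 2 * ppK x μ ν))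
    ∧ (∀ x : Fin 4 → ℝ, ∀ μ ν : Fin 4,
      lieD ΥK (fun y μ' ν' => lcMetric y μ' ν' - c * ppK y μ' ν') x μ ν
        = 2 * x 0 * (lcMetric x μ ν + M ^ 2 * ppK x μ ν)) :=
  stmt17_general b M hb1 c hc ΥD ΥK hΥD hΥK
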